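/- Define on V* ⊕ (⊕_{i∈Z/nZ} l_i) the symmetric bilinear form with quadratic form \bar q(φ ⊕ a) = 2 Σ_i ⟨φ, a_i⟩ + Σ_{i ≥ j} B(a_i, a_j). Then the radical of \bar q equals the image of the injective map \tilde∂ = (Φ_{−1}, ∂): ⊕_{i∈Z/nZ}(l_i ∩ l_{i+1}) → V* ⊕ (⊕ l_i), where ⟨Φ_{−1}(a), v⟩ = B(a_{\{n,1\}}, v) and (∂a)_i = a_{\{i,i+1\}} − a_{\{i−1,i\}}. Consequently the quotient \bar T has dimension (n+2)·(dim V)/2 − Σ_i dim(l_i ∩ l_{i+1}). -/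

import Mathlib

open Finset LinearMap Module

section Defs

variable {F V : Type} [Field F] [AddCommGroup V] [Module F V]

/-- `B` is a symplectic (non-degenerate alternating) bilinear form on `V`. -/
def IsSymplectic (B : V →ₗ[F] V →ₗ[F] F) : Prop :=
  (∀ x, B x x = 0) ∧ ∀ x : V, (∀ y, B x y = 0) → x = 0

/-- `l` is a Lagrangian subspace for `B` : it is isotropic and maximal
(equal to its own `B`-orthogonal). -/
def IsLagrangian (B : V →ₗ[F] V →ₗ[F] F) (l : Submodule F V) : Prop :=
  (∀ x ∈ l, ∀ y ∈ l, B x y = 0) ∧ ∀ x : V, (∀ y ∈ l, B x y = 0) → x ∈ l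

/-- The bilinear form `q(v,w) = ∑_{n ≥ i ≥ j ≥ 1} B(v_i, w_j)` on `n`-tuples
(indexed by `1,…,n`, modelled as functions `ℕ → V`). -/
noncomputable def mqL (n : ℕ) (B : V →ₗ[F] V →ₗ[F] F) :
    (ℕ → V) →ₗ[F] (ℕ → V) →ₗ[F] F :=
  ∑ i ∈ Icc 1 n, ∑ j ∈ Icc 1 i,
    B.compl₁₂ (LinearMap.proj i) (LinearMap.proj j)

/-- Membership in `K(l_1,…,l_n) = ker(Σ : ⊕ l_i → V)`: each component lies in the
corresponding Lagrangian and the components sum to zero. -/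
def InK (n : ℕ) (l : ℕ → Submodule F V) (v : ℕ → V) : Prop :=
  (∀ i ∈ Icc 1 n, v i ∈ l i) ∧ ∑ i ∈ Icc 1 n, v i = 0

/-- `K(l_1,…,l_n)` as a submodule of `ℕ → V` (components outside `{1,…,n}` vanish). -/
noncomputable def Ksub (n : ℕ) (l : ℕ → Submodule F V) : Submodule F (ℕ → V) :=
  (Submodule.pi Set.univ fun i => if i ∈ Icc 1 n then l i else ⊥) ⊓
    LinearMap.ker (∑ i ∈ Icc 1 n, (LinearMap.proj i : (ℕ → V) →ₗ[F] V))

/-- Cyclic successor on `{1,…,n}`. -/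
def nxt (n i : ℕ) : ℕ := if i = n then 1 else i + 1

/-- Cyclic predecessor on `{1,…,n}`. -/
def prv (n i : ℕ) : ℕ := if i = 1 then n else i - 1

end Defs

section Witt

variable {F M N : Type} [Field F] [AddCommGroup M] [Module F M]
  [AddCommGroup N] [Module F N]

/-- The orthogonal direct sum of two bilinear forms. -/
noncomputable def prodBF (B₁ : M →ₗ[F] M →ₗ[F] F) (B₂ : N →ₗ[F] N →ₗ[F] F) :
    (M × N) →ₗ[F] (M × N) →ₗ[F] F :=
  B₁.compl₁₂ (LinearMap.fst F M N) (LinearMap.fst F M N) +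
    B₂.compl₁₂ (LinearMap.snd F M N) (LinearMap.snd F M N)

/-- Two bilinear spaces are isometric. -/
def FormIsometric (B₁ : M →ₗ[F] M →ₗ[F] F) (B₂ : N →ₗ[F] N →ₗ[F] F) : Prop :=
  ∃ e : M ≃ₗ[F] N, ∀ x y, B₂ (e x) (e y) = B₁ x y

/-- A hyperbolic quadratic space: a non-degenerate symmetric form admitting a
totally isotropic subspace of half the dimension. -/
def IsHyperbolicForm (B : M →ₗ[F] M →ₗ[F] F) : Prop :=
  (∀ x y, B x y = B y x) ∧ (∀ x : M, (∀ y, B x y = 0) → x = 0) ∧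
    ∃ L : Submodule F M, (∀ x ∈ L, ∀ y ∈ L, B x y = 0) ∧
      Module.finrank F M = 2 * Module.finrank F L

/-- Two (non-degenerate symmetric) bilinear spaces represent the same class in the
Witt group `W(F)`: they become isometric after adding hyperbolic spaces. -/
def WittEquiv (B₁ : M →ₗ[F] M →ₗ[F] F) (B₂ : N →ₗ[F] N →ₗ[F] F) : Prop :=
  ∃ (m₁ m₂ : ℕ) (h₁ : (Fin m₁ → F) →ₗ[F] (Fin m₁ → F) →ₗ[F] F)
    (h₂ : (Fin m₂ → F) →ₗ[F] (Fin m₂ → F) →ₗ[F] F),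
    IsHyperbolicForm h₁ ∧ IsHyperbolicForm h₂ ∧
      FormIsometric (prodBF B₁ h₁) (prodBF B₂ h₂)

end Witt

section MoreDefs

variable {F V : Type} [Field F] [AddCommGroup V] [Module F V]

/-- `A` is an anti-derivative of the tuple `w` (cyclically indexed by `1,…,n`):
`A_{{i,i+1}} - A_{{i-1,i}} = w i`, where the edge `{i,i+1}` is indexed by `i`. -/
def IsAntiDeriv (n : ℕ) (w A : ℕ → V) : Prop :=
  ∀ i ∈ Icc 1 n, A i - A (prv n i) = w i

/-- The natural map `s : K(l_1,…,l_k) ⊕ K(l_1,l_k,…,l_n) → K(l_1,…,l_n)`,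
identity on each Lagrangian summand.  Here `v` is a `k`-tuple and `w` an
`(n-k+2)`-tuple whose slots `1, 2, 3, …` correspond to `l_1, l_k, l_{k+1}, …`. -/
def chainS (k : ℕ) (v w : ℕ → V) : ℕ → V := fun i =>
  (if i ≤ k then v i else 0) +
    (if i = 1 then w 1 else if k ≤ i then w (i - k + 2) else 0)

/-- The sequence `l_1, l_k, l_{k+1}, …, l_n` (of length `n - k + 2`). -/
def chainL (k : ℕ) (l : ℕ → Submodule F V) : ℕ → Submodule F V := fun j =>
  if j = 1 then l 1 else l (k + j - 2)

end MoreDefs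

/-- Projection to the `i`-th Lagrangian component of `V* ⊕ (⊕ l_i)` (ambient model
`(V →ₗ[F] F) × (ℕ → V)`). -/
noncomputable def bprj {F V : Type} [Field F] [AddCommGroup V] [Module F V] (i : ℕ) :
    ((V →ₗ[F] F) × (ℕ → V)) →ₗ[F] V :=
  (LinearMap.proj i).comp (LinearMap.snd F ((V →ₗ[F] F)) (ℕ → V))

/-- The symmetric bilinear form on `V* ⊕ (⊕ l_i)` polarizing the quadratic form
`\bar q(φ ⊕ a) = 2 Σ_i ⟨φ, a_i⟩ + Σ_{i ≥ j} B(a_i, a_j)`; explicitly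
`\bar q(φ⊕a, ψ⊕b) = Σ_i φ(b_i) + Σ_i ψ(a_i) + (1/2) Σ_{i ≥ j} (B(a_i,b_j) + B(b_i,a_j))`. -/
noncomputable def bqL {F V : Type} [Field F] [AddCommGroup V] [Module F V]
    (n : ℕ) (B : V →ₗ[F] V →ₗ[F] F) :
    ((V →ₗ[F] F) × (ℕ → V)) →ₗ[F] ((V →ₗ[F] F) × (ℕ → V)) →ₗ[F] F :=
  (∑ i ∈ Icc 1 n,
      (LinearMap.id : (V →ₗ[F] F) →ₗ[F] V →ₗ[F] F).compl₁₂
        (LinearMap.fst F ((V →ₗ[F] F)) (ℕ → V)) (bprj i)) +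
    (∑ i ∈ Icc 1 n,
      ((LinearMap.id : (V →ₗ[F] F) →ₗ[F] V →ₗ[F] F).flip).compl₁₂
        (bprj i) (LinearMap.fst F ((V →ₗ[F] F)) (ℕ → V))) +
    (2 : F)⁻¹ • (∑ i ∈ Icc 1 n, ∑ j ∈ Icc 1 i,
      (B.compl₁₂ (bprj i) (bprj j) + (B.compl₁₂ (bprj i) (bprj j)).flip))

/-- The submodule of `(V →ₗ[F] F) × (ℕ → V)` corresponding to `V* ⊕ (⊕_{i=1}^n l_i)`. -/
noncomputable def bW {F V : Type} [Field F] [AddCommGroup V] [Module F V]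
    (n : ℕ) (l : ℕ → Submodule F V) : Submodule F ((V →ₗ[F] F) × (ℕ → V)) :=
  (⊤ : Submodule F ((V →ₗ[F] F))).prod
    (Submodule.pi Set.univ fun i => if i ∈ Icc 1 n then l i else ⊥)

section Helpers

variable {F V : Type} [Field F] [AddCommGroup V] [Module F V]

lemma bqL_apply (n : ℕ) (B : V →ₗ[F] V →ₗ[F] F) (p r : (V →ₗ[F] F) × (ℕ → V)) :
    bqL n B p r = (∑ i ∈ Icc 1 n, p.1 (r.2 i)) + (∑ i ∈ Icc 1 n, r.1 (p.2 i)) +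
      (2:F)⁻¹ * ∑ i ∈ Icc 1 n, ∑ j ∈ Icc 1 i,
        (B (p.2 i) (r.2 j) + B (r.2 i) (p.2 j)) := by
  simp [bqL, bprj, LinearMap.sum_apply, LinearMap.compl₁₂_apply, smul_eq_mul]

lemma mem_bW_iff (n : ℕ) (l : ℕ → Submodule F V) (p : (V →ₗ[F] F) × (ℕ → V)) :
    p ∈ bW n l ↔ ∀ i, p.2 i ∈ (if i ∈ Icc 1 n then l i else (⊥ : Submodule F V)) := by
  simp [bW, Submodule.mem_prod, Submodule.mem_pi]

lemma prv_mem {n i : ℕ} (h1 : 1 ≤ i) (h2 : i ≤ n) : 1 ≤ prv n i ∧ prv n i ≤ n := by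
  unfold prv; split <;> omega

lemma nxt_mem {n i : ℕ} (h1 : 1 ≤ i) (h2 : i ≤ n) : 1 ≤ nxt n i ∧ nxt n i ≤ n := by
  unfold nxt; split <;> omega

lemma nxt_prv {n i : ℕ} (h1 : 1 ≤ i) (h2 : i ≤ n) : nxt n (prv n i) = i := by
  unfold nxt prv; split_ifs <;> omega

lemma prv_one (n : ℕ) : prv n 1 = n := by simp [prv]

lemma prv_of_ne {n i : ℕ} (h : i ≠ 1) : prv n i = i - 1 := by simp [prv, h]

lemma nxt_n (n : ℕ) : nxt n n = 1 := by simp [nxt]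

lemma skewB {B : V →ₗ[F] V →ₗ[F] F} (hB : ∀ x, B x x = 0) (x y : V) :
    B x y = - B y x := by
  have h := hB (x + y)
  simp only [map_add, LinearMap.add_apply, hB] at h
  linear_combination h

lemma sum_split {M : Type} [AddCommMonoid M] (f : ℕ → M) {k n : ℕ} (h1 : 1 ≤ k) (h2 : k ≤ n) :
    ∑ i ∈ Icc 1 n, f i = (∑ i ∈ Icc 1 (k-1), f i) + ∑ i ∈ Icc k n, f i := by
  have e0 : Icc 1 n = Ioc 0 n := Finset.Icc_add_one_left_eq_Ioc 0 n
  have e1 : Icc 1 (k-1) = Ioc 0 (k-1) := Finset.Icc_add_one_left_eq_Ioc 0 (k-1)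
  have e2 : Icc k n = Ioc (k-1) n := by
    rw [← Finset.Icc_add_one_left_eq_Ioc]; congr 1; omega
  rw [e0, e1, e2, Finset.sum_Ioc_consecutive f (Nat.zero_le _) (by omega)]

lemma telescope {n : ℕ} (c : ℕ → V) :
    ∀ k, 1 ≤ k → k ≤ n → ∑ j ∈ Icc 1 k, (c j - c (prv n j)) = c k - c n := by
  intro k
  induction k with
  | zero => omega
  | succ m ih =>
    intro h1 h2
    rcases Nat.eq_zero_or_pos m with rfl | hm
    · simp [prv_one]
    · rw [Finset.sum_Icc_succ_top (by omega)]
      rw [ih hm (by omega), prv_of_ne (by omega)]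
      simp only [Nat.add_sub_cancel]
      abel

end Helpers
section Helpers2

variable {F V : Type} [Field F] [AddCommGroup V] [Module F V] [FiniteDimensional F V]

lemma B_surj {B : V →ₗ[F] V →ₗ[F] F} (hB : IsSymplectic B) (φ : V →ₗ[F] F) :
    ∃ x, B x = φ := by
  have hinj : Function.Injective B := by
    rw [injective_iff_map_eq_zero]
    intro x hx
    exact hB.2 x fun y => by rw [hx]; rfl
  have hr : LinearMap.range B = ⊤ := by
    apply Submodule.eq_top_of_finrank_eq
    rw [LinearMap.finrank_range_of_inj hinj, Module.finrank_linearMap_self]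
  exact (LinearMap.range_eq_top.mp hr) φ

lemma lagr_dim {B : V →ₗ[F] V →ₗ[F] F} (hB : IsSymplectic B) {l : Submodule F V}
    (hl : IsLagrangian B l) : finrank F ↥l + finrank F ↥l = finrank F V := by
  set g : V →ₗ[F] (↥l →ₗ[F] F) := B.compl₂ l.subtype with hg
  have hker : LinearMap.ker g = l := by
    ext x
    simp only [LinearMap.mem_ker, hg, LinearMap.ext_iff, LinearMap.compl₂_apply,
      LinearMap.zero_apply, Submodule.coe_subtype]
    constructor
    · intro h
      exact hl.2 x fun y hy => h ⟨y, hy⟩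
    · intro hx y
      exact hl.1 x hx y y.2
  have hrange : LinearMap.range g = ⊤ := by
    rw [LinearMap.range_eq_top]
    intro ξ
    obtain ⟨φ, hφ⟩ := Subspace.dualRestrict_surjective (W := l) ξ
    obtain ⟨x, hx⟩ := B_surj hB φ
    refine ⟨x, ?_⟩
    ext y
    have := congrArg (fun f => f y) hφ
    simp only [Submodule.dualRestrict_apply] at this
    simp [hg, LinearMap.compl₂_apply, hx, ← this, LinearMap.domRestrict_apply]
  have := LinearMap.finrank_range_add_finrank_ker g
  rw [hrange, hker, finrank_top, Module.finrank_linearMap_self] at this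
  omega

end Helpers2
section Radical

variable {F V : Type} [Field F] [AddCommGroup V] [Module F V]

lemma radical_fwd [FiniteDimensional F V] (hchar : (2:F) ≠ 0) {n : ℕ} (hn : 1 ≤ n)
    {B : V →ₗ[F] V →ₗ[F] F} (hB : IsSymplectic B) {l : ℕ → Submodule F V}
    (hl : ∀ i ∈ Icc 1 n, IsLagrangian B (l i)) {p : (V →ₗ[F] F) × (ℕ → V)}
    (hp : p ∈ bW n l) (hrad : ∀ r ∈ bW n l, bqL n B p r = 0) :
    ∃ c : ℕ → V, (∀ i ∈ Icc 1 n, c i ∈ l i ⊓ l (nxt n i)) ∧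
      p.1 = -(B (c n)) ∧ ∀ i ∈ Icc 1 n, p.2 i = c i - c (prv n i) := by
  have hp' := (mem_bW_iff n l p).mp hp
  have ha : ∀ i ∈ Icc 1 n, p.2 i ∈ l i := fun i hi => by
    have := hp' i; rwa [if_pos hi] at this
  -- Step A : the components sum to zero
  have hsum0 : ∑ i ∈ Icc 1 n, p.2 i = 0 := by
    have hψ : ∀ ψ : V →ₗ[F] F, ψ (∑ i ∈ Icc 1 n, p.2 i) = 0 := by
      intro ψ
      have hm : ((ψ, 0) : (V →ₗ[F] F) × (ℕ → V)) ∈ bW n l := by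
        rw [mem_bW_iff]; intro i; exact zero_mem _
      have h0 := hrad _ hm
      rw [bqL_apply] at h0
      simpa [map_sum] using h0
    exact hB.2 _ fun y => hψ (B.flip y)
  have hstep : ∀ k, 1 ≤ k → ∑ j ∈ Icc 1 k, p.2 j
      = (∑ j ∈ Icc 1 (k-1), p.2 j) + p.2 k := by
    intro k hk1
    rw [sum_split (fun j => p.2 j) hk1 (le_refl k), Finset.Icc_self,
      Finset.sum_singleton]
  -- Step B : the key identity on each Lagrangian
  have key : ∀ k ∈ Icc 1 n, ∀ b ∈ l k,
      p.1 b = B (∑ j ∈ Icc 1 (k-1), p.2 j) b := by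
    intro k hk b hb
    obtain ⟨hk1, hkn⟩ := Finset.mem_Icc.mp hk
    have hm : ((0, Pi.single k b) : (V →ₗ[F] F) × (ℕ → V)) ∈ bW n l := by
      rw [mem_bW_iff]; intro i
      show (Pi.single k b : ℕ → V) i ∈ _
      rcases eq_or_ne i k with rfl | hik
      · rw [if_pos hk, Pi.single_eq_same]; exact hb
      · rw [Pi.single_eq_of_ne hik]; exact zero_mem _
    have h0 := hrad _ hm
    rw [bqL_apply] at h0
    dsimp only at h0
    have e1 : ∑ i ∈ Icc 1 n, p.1 ((Pi.single k b : ℕ → V) i) = p.1 b := by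
      rw [Finset.sum_eq_single_of_mem k hk (fun i _ hik => by
        rw [Pi.single_eq_of_ne hik, map_zero]), Pi.single_eq_same]
    have e3 : ∀ i, ∑ j ∈ Icc 1 i, B (p.2 i) ((Pi.single k b : ℕ → V) j)
        = if k ∈ Icc 1 i then B (p.2 i) b else 0 := by
      intro i
      rw [show (∑ j ∈ Icc 1 i, B (p.2 i) ((Pi.single k b : ℕ → V) j))
          = ∑ j ∈ Icc 1 i, if j = k then B (p.2 i) b else 0 from
        Finset.sum_congr rfl fun j _ => by
          rw [Pi.single_apply]; split <;> simp]
      exact Finset.sum_ite_eq' _ _ _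
    have e4 : ∀ i, ∑ j ∈ Icc 1 i, B ((Pi.single k b : ℕ → V) i) (p.2 j)
        = if i = k then B b (∑ j ∈ Icc 1 i, p.2 j) else 0 := by
      intro i
      rcases eq_or_ne i k with rfl | hik
      · rw [if_pos rfl, Pi.single_eq_same, map_sum]
      · rw [if_neg hik, Pi.single_eq_of_ne hik]; simp
    have e5 : ∑ i ∈ Icc 1 n, ∑ j ∈ Icc 1 i,
        (B (p.2 i) ((Pi.single k b : ℕ → V) j) + B ((Pi.single k b : ℕ → V) i) (p.2 j))
        = (∑ i ∈ Icc k n, B (p.2 i) b) + B b (∑ j ∈ Icc 1 k, p.2 j) := by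
      rw [Finset.sum_congr rfl (fun i _ => Finset.sum_add_distrib),
        Finset.sum_add_distrib]
      congr 1
      · rw [Finset.sum_congr rfl fun i _ => e3 i, ← Finset.sum_filter]
        congr 1
        ext i
        simp only [Finset.mem_filter, Finset.mem_Icc]
        omega
      · rw [Finset.sum_congr rfl fun i _ => e4 i,
          Finset.sum_ite_eq' (Icc 1 n) k _, if_pos hk]
    rw [e1, e5] at h0
    simp only [LinearMap.zero_apply, Finset.sum_const_zero, add_zero] at h0
    have hsplit1 : ∑ i ∈ Icc k n, B (p.2 i) b
        = - B (∑ j ∈ Icc 1 (k-1), p.2 j) b := by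
      have hs := sum_split (fun i => p.2 i) hk1 hkn
      rw [hsum0] at hs
      have h2 : ∑ i ∈ Icc k n, p.2 i = - ∑ j ∈ Icc 1 (k-1), p.2 j :=
        eq_neg_of_add_eq_zero_right hs.symm
      calc ∑ i ∈ Icc k n, B (p.2 i) b = B (∑ i ∈ Icc k n, p.2 i) b := by
            rw [map_sum, LinearMap.sum_apply]
        _ = - B (∑ j ∈ Icc 1 (k-1), p.2 j) b := by
            rw [h2, map_neg, LinearMap.neg_apply]
    have hsplit2 : B b (∑ j ∈ Icc 1 k, p.2 j)
        = - B (∑ j ∈ Icc 1 (k-1), p.2 j) b := by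
      rw [hstep k hk1, map_add]
      have hbk : B b (p.2 k) = - B (p.2 k) b := skewB hB.1 b (p.2 k)
      have h0k : B (p.2 k) b = 0 := (hl k hk).1 _ (ha k hk) b hb
      have hsk : B b (∑ j ∈ Icc 1 (k-1), p.2 j)
          = - B (∑ j ∈ Icc 1 (k-1), p.2 j) b := skewB hB.1 _ _
      rw [hbk, h0k, hsk]; ring
    rw [hsplit1, hsplit2] at h0
    have h2 : (2:F)⁻¹ * 2 = 1 := inv_mul_cancel₀ hchar
    linear_combination h0 + (B (∑ j ∈ Icc 1 (k-1), p.2 j) b) * h2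
  -- Step C/D : construct c
  obtain ⟨x, hx⟩ := B_surj hB p.1
  have hxl : ∀ k ∈ Icc 1 n, x - (∑ j ∈ Icc 1 (k-1), p.2 j) ∈ l k := by
    intro k hk
    apply (hl k hk).2
    intro y hy
    have hkey := key k hk y hy
    rw [← hx] at hkey
    rw [map_sub, LinearMap.sub_apply, hkey, sub_self]
  refine ⟨fun i => (∑ j ∈ Icc 1 i, p.2 j) - x, ?_, ?_, ?_⟩
  · intro i hi
    obtain ⟨hi1, hin⟩ := Finset.mem_Icc.mp hi
    refine Submodule.mem_inf.mpr ⟨?_, ?_⟩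
    · show (∑ j ∈ Icc 1 i, p.2 j) - x ∈ l i
      rw [show (∑ j ∈ Icc 1 i, p.2 j) - x
          = p.2 i - (x - ∑ j ∈ Icc 1 (i-1), p.2 j) from by
        rw [hstep i hi1]; abel]
      exact sub_mem (ha i hi) (hxl i hi)
    · show (∑ j ∈ Icc 1 i, p.2 j) - x ∈ l (nxt n i)
      rcases eq_or_ne i n with heq | hne
      · rw [heq, nxt_n, hsum0]
        have h1n : (1:ℕ) ∈ Icc 1 n := Finset.mem_Icc.mpr ⟨le_refl 1, hn⟩
        have hh := hxl 1 h1n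
        rw [show (1:ℕ) - 1 = 0 from rfl] at hh
        rw [show (∑ j ∈ Icc 1 0, p.2 j) = 0 from by simp] at hh
        simpa using (neg_mem hh)
      · have hnxt : nxt n i = i + 1 := by simp [nxt, hne]
        rw [hnxt]
        have hi1n : i + 1 ∈ Icc 1 n := Finset.mem_Icc.mpr ⟨by omega, by omega⟩
        have hh := hxl (i+1) hi1n
        rw [Nat.add_sub_cancel] at hh
        simpa using (neg_mem hh)
  · show p.1 = -(B ((∑ j ∈ Icc 1 n, p.2 j) - x))
    rw [hsum0, zero_sub, map_neg, neg_neg, hx]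
  · intro i hi
    obtain ⟨hi1, hin⟩ := Finset.mem_Icc.mp hi
    rcases eq_or_ne i 1 with rfl | hne
    · rw [prv_one]
      show p.2 1 = ((∑ j ∈ Icc 1 1, p.2 j) - x) - ((∑ j ∈ Icc 1 n, p.2 j) - x)
      rw [hsum0, Finset.Icc_self, Finset.sum_singleton]
      abel
    · rw [prv_of_ne hne]
      show p.2 i = ((∑ j ∈ Icc 1 i, p.2 j) - x) - ((∑ j ∈ Icc 1 (i-1), p.2 j) - x)
      rw [hstep i hi1]
      abel

end Radical
section Radical2

variable {F V : Type} [Field F] [AddCommGroup V] [Module F V]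

lemma radical_bwd (hchar : (2:F) ≠ 0) {n : ℕ} (hn : 1 ≤ n)
    {B : V →ₗ[F] V →ₗ[F] F} (hB : IsSymplectic B) {l : ℕ → Submodule F V}
    (hl : ∀ i ∈ Icc 1 n, IsLagrangian B (l i)) {p : (V →ₗ[F] F) × (ℕ → V)}
    {c : ℕ → V} (hc : ∀ i ∈ Icc 1 n, c i ∈ l i ⊓ l (nxt n i))
    (h1 : p.1 = -(B (c n))) (h2 : ∀ i ∈ Icc 1 n, p.2 i = c i - c (prv n i)) :
    ∀ r ∈ bW n l, bqL n B p r = 0 := by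
  intro r hr
  have hb : ∀ i ∈ Icc 1 n, r.2 i ∈ l i := fun i hi => by
    have := (mem_bW_iff n l r).mp hr i; rwa [if_pos hi] at this
  have htel : ∀ k, 1 ≤ k → k ≤ n → ∑ j ∈ Icc 1 k, p.2 j = c k - c n := by
    intro k hk1 hkn
    rw [Finset.sum_congr rfl fun j hj => h2 j (Finset.mem_Icc.mpr
      ⟨(Finset.mem_Icc.mp hj).1, le_trans (Finset.mem_Icc.mp hj).2 hkn⟩)]
    exact telescope c k hk1 hkn
  have hsum0 : ∑ i ∈ Icc 1 n, p.2 i = 0 := by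
    rw [htel n hn (le_refl n)]; simp
  have hprev : ∀ k, 1 ≤ k → k ≤ n →
      ∑ j ∈ Icc 1 (k-1), p.2 j = c (prv n k) - c n := by
    intro k hk1 hkn
    rcases eq_or_ne k 1 with rfl | hne
    · rw [prv_one]; simp
    · rw [prv_of_ne hne]
      exact htel (k-1) (by omega) (by omega)
  rw [bqL_apply, h1]
  have skew := skewB hB.1
  have isot : ∀ k ∈ Icc 1 n, ∀ x ∈ l k, ∀ y ∈ l k, B x y = 0 := fun k hk => (hl k hk).1
  have hT2 : ∑ i ∈ Icc 1 n, ∑ j ∈ Icc 1 i, B (r.2 i) (p.2 j)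
      = ∑ i ∈ Icc 1 n, B (c n) (r.2 i) := by
    refine Finset.sum_congr rfl fun i hi => ?_
    obtain ⟨hi1, hin⟩ := Finset.mem_Icc.mp hi
    rw [← map_sum, htel i hi1 hin, map_sub]
    have hz : B (r.2 i) (c i) = 0 :=
      isot i hi _ (hb i hi) _ (Submodule.mem_inf.mp (hc i hi)).1
    rw [hz, skew (r.2 i) (c n)]
    ring
  have hcomm : ∀ (f : ℕ → ℕ → F), ∑ i ∈ Icc 1 n, ∑ j ∈ Icc 1 i, f i j
      = ∑ j ∈ Icc 1 n, ∑ i ∈ Icc j n, f i j := fun f =>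
    Finset.sum_comm' (fun i j => by simp only [Finset.mem_Icc]; omega)
  have hT1 : ∑ i ∈ Icc 1 n, ∑ j ∈ Icc 1 i, B (p.2 i) (r.2 j)
      = ∑ i ∈ Icc 1 n, B (c n) (r.2 i) := by
    rw [hcomm]
    refine Finset.sum_congr rfl fun j hj => ?_
    obtain ⟨hj1, hjn⟩ := Finset.mem_Icc.mp hj
    have hsum : ∑ i ∈ Icc j n, p.2 i = -(c (prv n j) - c n) := by
      have hs := sum_split (fun i => p.2 i) hj1 hjn
      rw [hsum0, hprev j hj1 hjn] at hs
      exact eq_neg_of_add_eq_zero_right hs.symm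
    calc ∑ i ∈ Icc j n, B (p.2 i) (r.2 j)
        = B (∑ i ∈ Icc j n, p.2 i) (r.2 j) := by
          rw [map_sum, LinearMap.sum_apply]
      _ = B (c n) (r.2 j) := by
          rw [hsum, map_neg, LinearMap.neg_apply, map_sub, LinearMap.sub_apply]
          have hz : B (c (prv n j)) (r.2 j) = 0 := by
            obtain ⟨hp1, hpn⟩ := prv_mem hj1 hjn
            have hmem := (Submodule.mem_inf.mp
              (hc (prv n j) (Finset.mem_Icc.mpr ⟨hp1, hpn⟩))).2
            rw [nxt_prv hj1 hjn] at hmem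
            exact isot j hj _ hmem _ (hb j hj)
          rw [hz]; ring
  have hterm2 : ∑ i ∈ Icc 1 n, r.1 (p.2 i) = 0 := by
    rw [← map_sum, hsum0, map_zero]
  have hterm3 : ∑ i ∈ Icc 1 n, ∑ j ∈ Icc 1 i,
      (B (p.2 i) (r.2 j) + B (r.2 i) (p.2 j))
      = (∑ i ∈ Icc 1 n, B (c n) (r.2 i)) + ∑ i ∈ Icc 1 n, B (c n) (r.2 i) := by
    rw [Finset.sum_congr rfl fun i _ => Finset.sum_add_distrib,
      Finset.sum_add_distrib, hT1, hT2]
  rw [hterm2, hterm3]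
  have hterm1 : ∑ i ∈ Icc 1 n, (-(B (c n))) (r.2 i)
      = -∑ i ∈ Icc 1 n, B (c n) (r.2 i) := by simp
  rw [hterm1]
  have h2' : (2:F)⁻¹ * 2 = 1 := inv_mul_cancel₀ hchar
  linear_combination (∑ i ∈ Icc 1 n, B (c n) (r.2 i)) * h2'

end Radical2
section Inj

variable {F V : Type} [Field F] [AddCommGroup V] [Module F V]

lemma diff_inj {n : ℕ} (hn : 1 ≤ n) {B : V →ₗ[F] V →ₗ[F] F} (hB : IsSymplectic B)
    (c : ℕ → V) (hz : B (c n) = 0) (hd : ∀ i ∈ Icc 1 n, c i - c (prv n i) = 0) :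
    ∀ i ∈ Icc 1 n, c i = 0 := by
  have hcn : c n = 0 := hB.2 _ fun y => by rw [hz]; rfl
  have main : ∀ i, 1 ≤ i → i ≤ n → c i = 0 := by
    intro i
    induction i with
    | zero => omega
    | succ m ih =>
      intro h1 h2
      rcases Nat.eq_zero_or_pos m with rfl | hm
      · have h := hd 1 (Finset.mem_Icc.mpr ⟨le_refl 1, hn⟩)
        rw [prv_one, hcn, sub_zero] at h; exact h
      · have h := hd (m+1) (Finset.mem_Icc.mpr ⟨by omega, h2⟩)
        rw [prv_of_ne (by omega), Nat.add_sub_cancel, ih hm (by omega),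
          sub_zero] at h
        exact h
  intro i hi
  obtain ⟨h1, h2⟩ := Finset.mem_Icc.mp hi
  exact main i h1 h2

end Inj

section Dim

variable {F V : Type} [Field F] [AddCommGroup V] [Module F V]

/-- inclusion of the product of the intersections into `ℕ → V`. -/
noncomputable def toCL (n : ℕ) (l : ℕ → Submodule F V) :
    ((i : (Icc 1 n : Finset ℕ)) → ↥(l i ⊓ l (nxt n i))) →ₗ[F] (ℕ → V) :=
  LinearMap.pi fun i => if h : i ∈ Icc 1 n
    then (l i ⊓ l (nxt n i)).subtype.comp
      (LinearMap.proj (⟨i, h⟩ : (Icc 1 n : Finset ℕ)))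
    else 0

lemma toCL_apply_mem {n : ℕ} {l : ℕ → Submodule F V} {i : ℕ} (h : i ∈ Icc 1 n)
    (x : (i : (Icc 1 n : Finset ℕ)) → ↥(l i ⊓ l (nxt n i))) :
    toCL n l x i = (x ⟨i, h⟩ : V) := by
  simp only [toCL, LinearMap.pi_apply]; rw [dif_pos h]; rfl

lemma toCL_apply_not {n : ℕ} {l : ℕ → Submodule F V} {i : ℕ} (h : i ∉ Icc 1 n)
    (x : (i : (Icc 1 n : Finset ℕ)) → ↥(l i ⊓ l (nxt n i))) :
    toCL n l x i = 0 := by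
  simp only [toCL, LinearMap.pi_apply]; rw [dif_neg h]; rfl

/-- The map `\tilde ∂` into the ambient space. -/
noncomputable def Dmap (n : ℕ) (B : V →ₗ[F] V →ₗ[F] F) (l : ℕ → Submodule F V) :
    ((i : (Icc 1 n : Finset ℕ)) → ↥(l i ⊓ l (nxt n i))) →ₗ[F]
      ((V →ₗ[F] F) × (ℕ → V)) :=
  LinearMap.prod
    (-(B.comp ((LinearMap.proj n).comp (toCL n l))))
    (LinearMap.pi fun i => if i ∈ Icc 1 n
      then (LinearMap.proj i).comp (toCL n l)
        - (LinearMap.proj (prv n i)).comp (toCL n l)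
      else 0)

lemma Dmap_fst {n : ℕ} {B : V →ₗ[F] V →ₗ[F] F} {l : ℕ → Submodule F V} (x) :
    (Dmap n B l x).1 = -(B (toCL n l x n)) := rfl

lemma Dmap_snd_mem {n : ℕ} {B : V →ₗ[F] V →ₗ[F] F} {l : ℕ → Submodule F V}
    {i : ℕ} (h : i ∈ Icc 1 n) (x) :
    (Dmap n B l x).2 i = toCL n l x i - toCL n l x (prv n i) := by
  show (LinearMap.pi _) x i = _
  rw [LinearMap.pi_apply, if_pos h]; rfl

lemma Dmap_snd_not {n : ℕ} {B : V →ₗ[F] V →ₗ[F] F} {l : ℕ → Submodule F V}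
    {i : ℕ} (h : i ∉ Icc 1 n) (x) : (Dmap n B l x).2 i = 0 := by
  show (LinearMap.pi _) x i = _
  rw [LinearMap.pi_apply, if_neg h]; rfl

lemma Dmap_mem {n : ℕ} {B : V →ₗ[F] V →ₗ[F] F} {l : ℕ → Submodule F V} (x) :
    Dmap n B l x ∈ bW n l := by
  rw [mem_bW_iff]
  intro i
  by_cases h : i ∈ Icc 1 n
  · rw [if_pos h, Dmap_snd_mem h]
    obtain ⟨h1, h2⟩ := Finset.mem_Icc.mp h
    have hm1 : toCL n l x i ∈ l i ⊓ l (nxt n i) := by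
      rw [toCL_apply_mem h]; exact (x ⟨i, h⟩).2
    have hpmem : prv n i ∈ Icc 1 n :=
      Finset.mem_Icc.mpr ⟨(prv_mem h1 h2).1, (prv_mem h1 h2).2⟩
    have hm2 : toCL n l x (prv n i) ∈ l (prv n i) ⊓ l (nxt n (prv n i)) := by
      rw [toCL_apply_mem hpmem]; exact (x ⟨_, hpmem⟩).2
    rw [nxt_prv h1 h2] at hm2
    exact sub_mem (Submodule.mem_inf.mp hm1).1 (Submodule.mem_inf.mp hm2).2
  · rw [if_neg h, Dmap_snd_not h]
    exact zero_mem _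

/-- The isomorphism model of `bW`. -/
noncomputable def Gmap (n : ℕ) (l : ℕ → Submodule F V) :
    ↥(bW n l) →ₗ[F] ((V →ₗ[F] F) × ((i : (Icc 1 n : Finset ℕ)) → ↥(l i))) :=
  LinearMap.prod ((LinearMap.fst F _ _).comp (bW n l).subtype)
    (LinearMap.pi fun i => LinearMap.codRestrict (l i)
      ((LinearMap.proj (i : ℕ)).comp
        ((LinearMap.snd F _ _).comp (bW n l).subtype)) (fun x => by
        have h := (mem_bW_iff n l x).mp x.2 (i : ℕ)
        rwa [if_pos i.2] at h))

lemma Gmap_bij (n : ℕ) (l : ℕ → Submodule F V) : Function.Bijective (Gmap n l) := by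
  constructor
  · rw [injective_iff_map_eq_zero]
    intro x hx
    obtain ⟨hx1, hx2⟩ := Prod.ext_iff.mp hx
    apply Subtype.ext
    refine Prod.ext_iff.mpr ⟨hx1, funext fun i => ?_⟩
    by_cases h : i ∈ Icc 1 n
    · have := congrFun hx2 ⟨i, h⟩
      exact congrArg Subtype.val this
    · have := (mem_bW_iff n l x).mp x.2 i
      rw [if_neg h] at this
      simpa using this
  · rintro ⟨φ, y⟩
    refine ⟨⟨(φ, fun i => if h : i ∈ Icc 1 n then (y ⟨i, h⟩ : V) else 0), ?_⟩, ?_⟩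
    · rw [mem_bW_iff]
      intro i
      dsimp only
      by_cases h : i ∈ Icc 1 n
      · rw [if_pos h, dif_pos h]; exact (y ⟨i, h⟩).2
      · rw [if_neg h, dif_neg h]; exact zero_mem _
    · refine Prod.ext_iff.mpr ⟨rfl, funext fun i => ?_⟩
      apply Subtype.ext
      show (if h : (i : ℕ) ∈ Icc 1 n then (y ⟨(i : ℕ), h⟩ : V) else 0) = (y i : V)
      rw [dif_pos i.2]

end Dim

set_option maxHeartbeats 1000000 in
set_option synthInstance.maxHeartbeats 400000 in
/-- The radical of `\bar q` on `V* ⊕ (⊕ l_i)` is exactly the image of the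
injective map `\tilde ∂ = (Φ_{−1}, ∂)`, where `⟨Φ_{−1}(c), v⟩ = B(c_{{n,1}}, v)` (with the
sign convention making the square commute, i.e. `p.1 = −B(c_n, ·) = B(·, c_n)`) and
`(∂c)_i = c_{{i,i+1}} − c_{{i−1,i}}`; consequently
`dim \bar T = (n+2)·(dim V)/2 − Σ_i dim(l_i ∩ l_{i+1})` (stated multiplied by 2). -/
theorem barT_radical_and_dim
    {F V : Type} [Field F] [AddCommGroup V] [Module F V] [FiniteDimensional F V]
    (hchar : (2 : F) ≠ 0) (n : ℕ) (hn : 1 ≤ n)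
    (B : V →ₗ[F] V →ₗ[F] F) (hB : IsSymplectic B)
    (l : ℕ → Submodule F V) (hl : ∀ i ∈ Icc 1 n, IsLagrangian B (l i)) :
    (∀ p : (V →ₗ[F] F) × (ℕ → V), p ∈ bW n l →
      ((∀ r ∈ bW n l, bqL n B p r = 0) ↔
        ∃ c : ℕ → V, (∀ i ∈ Icc 1 n, c i ∈ l i ⊓ l (nxt n i)) ∧
          p.1 = -(B (c n)) ∧ ∀ i ∈ Icc 1 n, p.2 i = c i - c (prv n i))) ∧
    (∀ c : ℕ → V, (∀ i ∈ Icc 1 n, c i ∈ l i ⊓ l (nxt n i)) →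
      B (c n) = 0 → (∀ i ∈ Icc 1 n, c i - c (prv n i) = 0) →
        ∀ i ∈ Icc 1 n, c i = 0) ∧
    2 * Module.finrank F
        (@HasQuotient.Quotient ↥(bW n l) _
          (@Submodule.hasQuotient F ↥(bW n l) _ (bW n l).addCommGroup (bW n l).module)
          (LinearMap.ker ((bqL n B).domRestrict₁₂ (bW n l) (bW n l)))) +
      2 * (∑ i ∈ Icc 1 n, Module.finrank F ↥(l i ⊓ l (nxt n i)))
    = (n + 2) * Module.finrank F V := by
  have part1 : ∀ p : (V →ₗ[F] F) × (ℕ → V), p ∈ bW n l →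
      ((∀ r ∈ bW n l, bqL n B p r = 0) ↔
        ∃ c : ℕ → V, (∀ i ∈ Icc 1 n, c i ∈ l i ⊓ l (nxt n i)) ∧
          p.1 = -(B (c n)) ∧ ∀ i ∈ Icc 1 n, p.2 i = c i - c (prv n i)) := by
    intro p hp
    constructor
    · exact radical_fwd hchar hn hB hl hp
    · rintro ⟨c, hc, h1, h2⟩
      exact radical_bwd hchar hn hB hl hc h1 h2
  have part2 : ∀ c : ℕ → V, (∀ i ∈ Icc 1 n, c i ∈ l i ⊓ l (nxt n i)) →
      B (c n) = 0 → (∀ i ∈ Icc 1 n, c i - c (prv n i) = 0) →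
        ∀ i ∈ Icc 1 n, c i = 0 := fun c _ hz hd => diff_inj hn hB c hz hd
  refine ⟨part1, part2, ?_⟩
  classical
  set K := LinearMap.ker ((bqL n B).domRestrict₁₂ (bW n l) (bW n l)) with hK
  set D : ((i : (Icc 1 n : Finset ℕ)) → ↥(l i ⊓ l (nxt n i))) →ₗ[F] ↥(bW n l) :=
    (Dmap n B l).codRestrict (bW n l) (fun x => Dmap_mem x) with hDdef
  have hval : ∀ x, (D x : (V →ₗ[F] F) × (ℕ → V)) = Dmap n B l x := fun x => rfl
  have hnmem : n ∈ Icc 1 n := Finset.mem_Icc.mpr ⟨hn, le_refl n⟩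
  have hDinj : Function.Injective D := by
    rw [injective_iff_map_eq_zero]
    intro x hx
    have hx' : Dmap n B l x = 0 := by rw [← hval]; exact congrArg Subtype.val hx
    have hc : ∀ i ∈ Icc 1 n, toCL n l x i ∈ l i ⊓ l (nxt n i) := fun i hi => by
      rw [toCL_apply_mem hi]; exact (x ⟨i, hi⟩).2
    have hz : B (toCL n l x n) = 0 := by
      have h1 : -(B (toCL n l x n)) = 0 := by
        rw [← Dmap_fst x]; exact (Prod.ext_iff.mp hx').1
      exact neg_eq_zero.mp h1
    have hd : ∀ i ∈ Icc 1 n, toCL n l x i - toCL n l x (prv n i) = 0 := fun i hi => by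
      rw [← Dmap_snd_mem hi x]
      exact congrFun (Prod.ext_iff.mp hx').2 i
    have hzero := part2 (toCL n l x) hc hz hd
    funext i
    apply Subtype.ext
    show (x i : V) = 0
    have he : (x i : V) = toCL n l x i := (toCL_apply_mem i.2 x).symm
    rw [he, hzero i i.2]
  have hDrange : LinearMap.range D = K := by
    ext q
    simp only [LinearMap.mem_range, LinearMap.mem_ker, hK]
    constructor
    · rintro ⟨x, rfl⟩
      apply LinearMap.ext
      intro r
      rw [LinearMap.domRestrict₁₂_apply, LinearMap.zero_apply]
      refine radical_bwd hchar hn hB hl (p := (D x : (V →ₗ[F] F) × (ℕ → V)))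
        (c := toCL n l x) ?_ ?_ ?_ (r : (V →ₗ[F] F) × (ℕ → V)) r.2
      · intro i hi; rw [toCL_apply_mem hi]; exact (x ⟨i, hi⟩).2
      · rw [hval]; exact Dmap_fst x
      · intro i hi; rw [hval]; exact Dmap_snd_mem hi x
    · intro hq
      have hrad : ∀ r ∈ bW n l, bqL n B (q : (V →ₗ[F] F) × (ℕ → V)) r = 0 := by
        intro r hr
        have h := LinearMap.congr_fun hq (⟨r, hr⟩ : ↥(bW n l))
        rwa [LinearMap.domRestrict₁₂_apply, LinearMap.zero_apply] at h
      obtain ⟨c, hc, h1, h2⟩ := radical_fwd hchar hn hB hl q.2 hrad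
      refine ⟨fun i => ⟨c i, hc i i.2⟩, ?_⟩
      apply Subtype.ext
      rw [hval]
      have hcl : ∀ i, ∀ hi : i ∈ Icc 1 n,
          toCL n l (fun j => ⟨c j, hc j j.2⟩) i = c i := fun i hi => toCL_apply_mem hi _
      refine Prod.ext_iff.mpr ⟨?_, funext fun i => ?_⟩
      · rw [Dmap_fst, hcl n hnmem, ← h1]
      · by_cases hi : i ∈ Icc 1 n
        · obtain ⟨hi1, hi2⟩ := Finset.mem_Icc.mp hi
          have hpmem : prv n i ∈ Icc 1 n :=
            Finset.mem_Icc.mpr ⟨(prv_mem hi1 hi2).1, (prv_mem hi1 hi2).2⟩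
          rw [Dmap_snd_mem hi, hcl i hi, hcl _ hpmem, ← h2 i hi]
        · rw [Dmap_snd_not hi]
          have h := (mem_bW_iff n l q).mp q.2 i
          rw [if_neg hi] at h
          exact ((Submodule.mem_bot F).mp h).symm
  have hGequiv := LinearEquiv.ofBijective (Gmap n l) (Gmap_bij n l)
  haveI : FiniteDimensional F ↥(bW n l) := Module.Finite.equiv hGequiv.symm
  have hbWdim : finrank F ↥(bW n l)
      = finrank F V + ∑ i ∈ Icc 1 n, finrank F ↥(l i) := by
    rw [hGequiv.finrank_eq, Module.finrank_prod, Module.finrank_linearMap_self,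
      Module.finrank_pi_fintype]
    congr 1
    exact Finset.sum_coe_sort (Icc 1 n) fun j => finrank F ↥(l j)
  have hkerdim : finrank F ↥K = ∑ i ∈ Icc 1 n, finrank F ↥(l i ⊓ l (nxt n i)) := by
    rw [← hDrange, ← (LinearEquiv.ofInjective D hDinj).finrank_eq,
      Module.finrank_pi_fintype]
    exact Finset.sum_coe_sort (Icc 1 n) fun j => finrank F ↥(l j ⊓ l (nxt n j))
  have hquot := @Submodule.finrank_quotient_add_finrank F ↥(bW n l) _ (bW n l).addCommGroup (bW n l).module _ _ _ K
  have hlag : ∀ i ∈ Icc 1 n, finrank F ↥(l i) + finrank F ↥(l i) = finrank F V :=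
    fun i hi => lagr_dim hB (hl i hi)
  have hsuml : (∑ i ∈ Icc 1 n, finrank F ↥(l i)) + (∑ i ∈ Icc 1 n, finrank F ↥(l i))
      = n * finrank F V := by
    rw [← Finset.sum_add_distrib, Finset.sum_congr rfl hlag, Finset.sum_const,
      Nat.card_Icc, smul_eq_mul]
    congr 1
  rw [← hkerdim]
  have hsplit : 2 * finrank F (@HasQuotient.Quotient ↥(bW n l) _
          (@Submodule.hasQuotient F ↥(bW n l) _ (bW n l).addCommGroup (bW n l).module) K) + 2 * finrank F ↥K
      = 2 * (finrank F (@HasQuotient.Quotient ↥(bW n l) _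
          (@Submodule.hasQuotient F ↥(bW n l) _ (bW n l).addCommGroup (bW n l).module) K) + finrank F ↥K) := by ring
  rw [hsplit, hquot, hbWdim]
  calc 2 * (finrank F V + ∑ i ∈ Icc 1 n, finrank F ↥(l i))
      = 2 * finrank F V + ((∑ i ∈ Icc 1 n, finrank F ↥(l i))
          + ∑ i ∈ Icc 1 n, finrank F ↥(l i)) := by ring
    _ = 2 * finrank F V + n * finrank F V := by rw [hsuml]
    _ = (n + 2) * finrank F V := by ring
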